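/- arXiv:2503.03690 — 8 statements merged into one kernel-verified Lean document; each statement's English description precedes it below -/
import Mathlib

section
/- Let A be a finite set of real numbers of size N ≥ 2, written as a_1 < a_2 < ... < a_N, such that the consecutive differences a_{i+1} - a_i are strictly increasing in i (i.e. A is a convex set). Then the sumset A + A - A = {a + b - c : a, b, c ∈ A} has cardinality at least N(N-1)/2. -/
/-- If `A = {a 0 < a 1 < ... < a (N-1)}` is a convex set of reals (consecutive
differences strictly increasing), then `|A + A - A| ≥ N(N-1)/2`. -/
theorem stmt_0 (N : ℕ) (hN : 2 ≤ N) (a : Fin N → ℝ) (ha : StrictMono a)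
    (hconv : ∀ i : ℕ, (h : i + 2 < N) →
      a ⟨i + 1, by omega⟩ - a ⟨i, by omega⟩ < a ⟨i + 2, h⟩ - a ⟨i + 1, by omega⟩) :
    N * (N - 1) / 2 ≤
      (Finset.image (fun p : Fin N × Fin N × Fin N => a p.1 + a p.2.1 - a p.2.2)
        Finset.univ).card := by
  classical
  set b : ℕ → ℝ := fun k => if h : k < N then a ⟨k, h⟩ else 0 with hbdef
  have hb : ∀ k (h : k < N), b k = a ⟨k, h⟩ := by
    intro k h; simp [hbdef, h]
  have hble : ∀ k k' : ℕ, k ≤ k' → k' < N → b k ≤ b k' := by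
    intro k k' hk h
    rw [hb k (by omega), hb k' h]
    exact ha.monotone (by simp [Fin.mk_le_mk]; omega)
  have hconv' : ∀ i : ℕ, i + 2 < N → b (i+1) - b i < b (i+2) - b (i+1) := by
    intro i h
    rw [hb (i+1) (by omega), hb i (by omega), hb (i+2) h]
    exact hconv i h
  have hdpos : ∀ k : ℕ, k + 1 < N → 0 < b (k+1) - b k := by
    intro k h
    rw [hb (k+1) h, hb k (by omega)]
    have := ha (a := ⟨k, by omega⟩) (b := ⟨k+1, h⟩) (by simp [Fin.mk_lt_mk])
    linarith
  have hds : ∀ k k' : ℕ, k < k' → k' + 1 < N → b (k+1) - b k < b (k'+1) - b k' := by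
    intro k k'
    induction k' with
    | zero => omega
    | succ m ih =>
      intro hk h
      have h1 := hconv' m (by omega)
      rcases Nat.lt_or_ge k m with hkm | hkm
      · have h2 := ih hkm (by omega)
        linarith
      · have : k = m := by omega
        subst this
        linarith
  have hd : ∀ k k' : ℕ, k ≤ k' → k' + 1 < N → b (k+1) - b k ≤ b (k'+1) - b k' := by
    intro k k' hk h
    rcases Nat.lt_or_ge k k' with h' | h'
    · exact le_of_lt (hds k k' h' h)
    · have : k = k' := by omega
      subst this; rfl
  -- the key collision-freeness fact
  have key : ∀ i j i' j' : ℕ, i < j → j < N → i' < j' → j' < j →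
      b (i+1) + b j - b i = b (i'+1) + b j' - b i' → False := by
    intro i j i' j' h1 h2 h3 h4 heq
    obtain ⟨m, rfl⟩ : ∃ m, j = m + 2 := ⟨j - 2, by omega⟩
    have e1 : b j' ≤ b (m+1) := hble j' (m+1) (by omega) (by omega)
    have e2 : b (i'+1) - b i' ≤ b (m+1) - b m := hd i' m (by omega) (by omega)
    have e3 : b (m+1) - b m < b (m+2) - b (m+1) := hconv' m h2
    have e4 : 0 < b (i+1) - b i := hdpos i (by omega)
    linarith
  set s : Finset ((_ : ℕ) × ℕ) := (Finset.range N).sigma fun j => Finset.range j with hs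
  have hcard : s.card = ∑ j ∈ Finset.range N, j := by
    rw [hs, Finset.card_sigma]
    simp
  have hgauss := Finset.sum_range_id_mul_two N
  have hmem : ∀ p : (_ : ℕ) × ℕ, p ∈ s → p.2 < p.1 ∧ p.1 < N := by
    intro p hp
    rw [hs, Finset.mem_sigma] at hp
    simp only [Finset.mem_range] at hp
    exact ⟨hp.2, hp.1⟩
  have hle : s.card ≤ (Finset.image (fun p : Fin N × Fin N × Fin N =>
      a p.1 + a p.2.1 - a p.2.2) Finset.univ).card := by
    apply Finset.card_le_card_of_injOn (fun p => b (p.2 + 1) + b p.1 - b p.2)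
    · intro p hp
      obtain ⟨hij, hjN⟩ := hmem p hp
      refine Finset.mem_image.mpr ⟨(⟨p.2 + 1, by omega⟩, ⟨p.1, hjN⟩, ⟨p.2, by omega⟩),
        Finset.mem_univ _, ?_⟩
      simp only
      rw [hb (p.2+1) (by omega), hb p.1 hjN, hb p.2 (by omega)]
    · intro p hp q hq heq
      obtain ⟨hij, hjN⟩ := hmem p hp
      obtain ⟨hij', hjN'⟩ := hmem q hq
      obtain ⟨j, i⟩ := p
      obtain ⟨j', i'⟩ := q
      simp only at hij hjN hij' hjN' heq
      rcases lt_trichotomy j j' with hjj | hjj | hjj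
      · exact absurd (key i' j' i j hij' hjN' hij hjj heq.symm) (fun h => h.elim)
      · subst hjj
        have : i = i' := by
          by_contra hne
          rcases Nat.lt_or_ge i i' with h' | h'
          · have := hds i i' h' (by omega)
            linarith
          · have := hds i' i (by omega) (by omega)
            linarith
        subst this; rfl
      · exact absurd (key i j i' j' hij hjN hij' hjj heq) (fun h => h.elim)
  calc N * (N - 1) / 2 = s.card := by rw [hcard]; omega
    _ ≤ _ := hle
end

section
/- Let A = {a_1 < ... < a_N} be a finite convex set of real numbers, and fix an index i with 1 ≤ i ≤ N-1. Then the interval (a_i, a_{i+1}] contains at least i elements of A + A - A; specifically, the numbers a_i + (a_{j+1} - a_j) for 1 ≤ j ≤ i are distinct elements of A + A - A lying in (a_i, a_{i+1}]. -/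
/-- Differences are strictly increasing: for `1 ≤ j < k` with `k+1 ≤ N`,
`a (j+1) - a j < a (k+1) - a k`. -/
lemma diff_strict (N : ℕ) (a : ℕ → ℝ)
    (hconv : ∀ j : ℕ, 1 ≤ j → j + 2 ≤ N →
      a (j + 1) - a j < a (j + 2) - a (j + 1)) :
    ∀ j k : ℕ, 1 ≤ j → j < k → k + 1 ≤ N →
      a (j + 1) - a j < a (k + 1) - a k := by
  intro j k hj hjk hkN
  induction k with
  | zero => omega
  | succ m ih =>
    rcases Nat.lt_or_ge j m with h | h
    · have := ih (by omega) (by omega)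
      have h2 := hconv m (by omega) (by omega)
      have : a (m + 2) = a (m + 1 + 1) := by ring_nf
      linarith [hconv m (by omega) (by omega)]
    · have : j = m := by omega
      subst this
      have := hconv j (by omega) (by omega)
      linarith

/-- For a convex set `A = {a 1 < ... < a N}` and an index `1 ≤ i ≤ N-1`, the
numbers `a i + (a (j+1) - a j)` for `1 ≤ j ≤ i` are `i` distinct elements of
`A + A - A` lying in the interval `(a i, a (i+1)]`. -/
theorem stmt_1 (N : ℕ) (a : ℕ → ℝ)
    (hmono : ∀ j k : ℕ, 1 ≤ j → j < k → k ≤ N → a j < a k)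
    (hconv : ∀ j : ℕ, 1 ≤ j → j + 2 ≤ N →
      a (j + 1) - a j < a (j + 2) - a (j + 1))
    (i : ℕ) (hi1 : 1 ≤ i) (hiN : i + 1 ≤ N) :
    ((Finset.Icc 1 i).image (fun j => a i + (a (j + 1) - a j))).card = i ∧
    ∀ x ∈ (Finset.Icc 1 i).image (fun j => a i + (a (j + 1) - a j)),
      x ∈ Set.Ioc (a i) (a (i + 1)) ∧
      ∃ p q r : ℕ, (1 ≤ p ∧ p ≤ N) ∧ (1 ≤ q ∧ q ≤ N) ∧ (1 ≤ r ∧ r ≤ N) ∧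
        x = a p + a q - a r := by
  have hd := diff_strict N a hconv
  constructor
  · rw [Finset.card_image_of_injOn, Nat.card_Icc]
    · omega
    · intro x hx y hy hxy
      simp only [Finset.coe_Icc, Set.mem_Icc] at hx hy
      simp only at hxy
      by_contra hne
      rcases Nat.lt_or_ge x y with h | h
      · have := hd x y hx.1 h (by omega)
        linarith
      · have := hd y x hy.1 (by omega) (by omega)
        linarith
  · intro x hx
    simp only [Finset.mem_image, Finset.mem_Icc] at hx
    obtain ⟨j, ⟨hj1, hji⟩, rfl⟩ := hx
    refine ⟨⟨?_, ?_⟩, i, j + 1, j, ⟨hi1, by omega⟩, ⟨by omega, by omega⟩,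
      ⟨hj1, by omega⟩, by ring⟩
    · have := hmono j (j + 1) hj1 (by omega) (by omega)
      linarith
    · rcases Nat.lt_or_ge j i with h | h
      · have := hd j i hj1 h hiN
        linarith
      · have : j = i := by omega
        subst this; linarith
end

section
/- Let A be a finite set of real numbers and let D = {d_1 < d_2 < ... < d_{|D|}} be the set of positive elements of A - A. Suppose a, a' ∈ A with a' < a and the number of elements of A + A - A lying in the half-open interval (a', a] is at most N. Then a - a' ≤ d_N. -/
/-!
Translation by `a'` maps every positive difference `d ≤ a - a'` of `A` to
`a' + d ∈ (A + A - A) ∩ (a', a]`, so at most `N` positive differences are `≤ a - a'`.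
Since `a - a'` is itself one of them, it cannot exceed `d_N`: otherwise `d_1, …, d_N`
and `a - a'` would be `N + 1` of them.
-/

open Finset
open scoped Pointwise

namespace Finset

variable {α : Type*}

theorem image_add_sub_product [AddGroup α] [DecidableEq α] (s t u : Finset α) :
    ((s ×ˢ t ×ˢ u).image fun p => p.1 + p.2.1 - p.2.2) = s + t - u := by
  ext x
  simp only [mem_image, mem_product, mem_sub, mem_add, Prod.exists]
  constructor
  · rintro ⟨a, b, c, ⟨ha, hb, hc⟩, rfl⟩
    exact ⟨a + b, ⟨a, ha, b, hb, rfl⟩, c, hc, rfl⟩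
  · rintro ⟨_, ⟨a, ha, b, hb, rfl⟩, c, hc, rfl⟩
    exact ⟨a, b, c, ⟨ha, hb, hc⟩, rfl⟩

theorem le_orderEmbOfFin_of_card_filter_le [LinearOrder α] {s : Finset α} {m : ℕ}
    (hm : #s = m) (k : Fin m) {x : α} (hx : x ∈ s) (hcard : #{d ∈ s | d ≤ x} ≤ k + 1) :
    x ≤ s.orderEmbOfFin hm k := by
  by_contra! hlt
  have hbelow : (Iic k).map (s.orderEmbOfFin hm).toEmbedding ⊆ {d ∈ s | d < x} := by
    simp only [subset_iff, mem_map, mem_Iic, mem_filter]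
    rintro _ ⟨i, hik, rfl⟩
    exact ⟨orderEmbOfFin_mem s hm i, ((s.orderEmbOfFin hm).monotone hik).trans_lt hlt⟩
  have hstrict : {d ∈ s | d < x} ⊂ {d ∈ s | d ≤ x} :=
    ssubset_iff_of_subset (monotone_filter_right s fun _ _ => le_of_lt) |>.2
      ⟨x, by simp [hx]⟩
  have := (card_le_card hbelow).trans_lt (card_lt_card hstrict)
  simp only [card_map, Fin.card_Iic] at this
  omega

variable [AddCommGroup α] [LinearOrder α] [IsOrderedAddMonoid α] [DecidableEq α]

theorem card_pos_sub_le_card_add_sub_Ioc {A : Finset α} {a a' : α} (ha' : a' ∈ A) :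
    #{d ∈ A - A | 0 < d ∧ d ≤ a - a'} ≤ #{x ∈ A + A - A | a' < x ∧ x ≤ a} := by
  refine card_le_card_of_injOn (a' + ·) ?_ (add_right_injective a').injOn
  simp only [Set.MapsTo, coe_filter, Set.mem_ofPred_eq, mem_sub]
  rintro _ ⟨⟨x, hx, y, hy, rfl⟩, hpos, hle⟩
  refine ⟨⟨x + a', add_mem_add hx ha', y, hy, by abel⟩, ?_, ?_⟩
  · simpa using hpos
  · simpa [le_sub_iff_add_le'] using hle

end Finset

/-- Equidistribution lemma: let `D = {d_1 < d_2 < ...}` be the set of positive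
differences of a finite set `A ⊂ ℝ`. If `a', a ∈ A` with `a' < a` and at most
`N` elements of `A + A - A` lie in `(a', a]`, then `a - a' ≤ d_N`. -/
theorem stmt_4 (A D : Finset ℝ)
    (hD : D = ((A ×ˢ A).image (fun p => p.1 - p.2)).filter (fun x => 0 < x))
    (m : ℕ) (hm : D.card = m) (N : ℕ) (hN1 : 1 ≤ N) (hNm : N ≤ m)
    (a a' : ℝ) (ha : a ∈ A) (ha' : a' ∈ A) (haa : a' < a)
    (hcount : (((A ×ˢ A ×ˢ A).image (fun p => p.1 + p.2.1 - p.2.2)).filter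
        (fun x => a' < x ∧ x ≤ a)).card ≤ N) :
    a - a' ≤ (D.orderIsoOfFin hm ⟨N - 1, by omega⟩ : ℝ) := by
  rw [image_sub_product] at hD
  rw [image_add_sub_product] at hcount
  have hmem : a - a' ∈ D := by
    rw [hD, mem_filter]
    exact ⟨sub_mem_sub ha ha', sub_pos.2 haa⟩
  have hcard : #{d ∈ D | d ≤ a - a'} ≤ N - 1 + 1 := by
    rw [hD, filter_filter, Nat.sub_add_cancel hN1]
    exact (card_pos_sub_le_card_add_sub_Ioc ha').trans hcount
  exact le_orderEmbOfFin_of_card_filter_le hm _ hmem hcard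
end

section
/- Let f_1, ..., f_n be real analytic functions on an open interval containing a compact interval I, with derivatives f_1', ..., f_n' linearly independent and nonvanishing on I, and suppose f_n' never vanishes. Then the functions (f_i ∘ f_n⁻¹)'' for 1 ≤ i ≤ n-1 are linearly independent, where f_n⁻¹ is the inverse of f_n restricted to I. Equivalently, if a_1, ..., a_{n-1} are real numbers with Σ a_i (f_i ∘ f_n⁻¹)'' ≡ 0 on f_n(I), then all a_i = 0. -/
/-!
Write `g = f_n` and `h = g⁻¹`. Near every interior point `g x`, `h` is a genuine local inverse, so
`(f_i ∘ h)' = (f_i' / g') ∘ h` there, and the hypothesis says that `Σ c_i (f_i ∘ h)'` has zero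
derivative on the open interval `g (a, b)`. Hence `Σ c_i f_i' / g'` is a constant `α` on `(a, b)`,
so `Σ c_i f_i' - α g'` vanishes on `(a, b)`, hence by continuity on `[a, b]`, and linear
independence of the `f_i'` forces all `c_i = 0`.
-/

open Set Filter
open scoped Topology

section LeftInverse

variable {f g h : ℝ → ℝ} {s : Set ℝ} {x : ℝ}

theorem HasStrictDerivAt.image_mem_nhds {g' : ℝ} (hg : HasStrictDerivAt g g' x) (hg' : g' ≠ 0)
    (hs : s ∈ 𝓝 x) : g '' s ∈ 𝓝 (g x) := by
  rw [← hg.map_nhds_eq hg']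
  exact image_mem_map hs

theorem ContDiffOn.hasStrictDerivAt_of_isOpen {n : WithTop ℕ∞} (hg : ContDiffOn ℝ n g s)
    (hs : IsOpen s) (hn : n ≠ 0) (hx : x ∈ s) : HasStrictDerivAt g (deriv g x) x :=
  (hg.contDiffAt (hs.mem_nhds hx)).hasStrictDerivAt hn

theorem ContDiffOn.isOpen_image {n : WithTop ℕ∞} (hg : ContDiffOn ℝ n g s) (hs : IsOpen s)
    (hn : n ≠ 0) (hg' : ∀ x ∈ s, deriv g x ≠ 0) : IsOpen (g '' s) := by
  rw [isOpen_iff_mem_nhds]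
  rintro _ ⟨x, hx, rfl⟩
  exact (hg.hasStrictDerivAt_of_isOpen hs hn hx).image_mem_nhds (hg' x hx) (hs.mem_nhds hx)

theorem Set.LeftInvOn.hasStrictDerivAt {n : WithTop ℕ∞} (hgh : LeftInvOn h g s)
    (hg : ContDiffOn ℝ n g s) (hs : IsOpen s) (hn : n ≠ 0) (hx : x ∈ s) (hg' : deriv g x ≠ 0) :
    HasStrictDerivAt h (deriv g x)⁻¹ (g x) :=
  (hg.hasStrictDerivAt_of_isOpen hs hn hx).to_local_left_inverse hg' <|
    eventually_of_mem (hs.mem_nhds hx) fun _ ht => hgh ht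

theorem Set.LeftInvOn.deriv_comp {n : WithTop ℕ∞} (hgh : LeftInvOn h g s)
    (hg : ContDiffOn ℝ n g s) (hs : IsOpen s) (hn : n ≠ 0) (hg' : ∀ x ∈ s, deriv g x ≠ 0)
    (hf : DifferentiableOn ℝ f s) :
    EqOn (deriv (f ∘ h)) ((deriv f / deriv g) ∘ h) (g '' s) := by
  rintro _ ⟨x, hx, rfl⟩
  have hh := (hgh.hasStrictDerivAt hg hs hn hx (hg' x hx)).hasDerivAt
  have hfx := ((hf x hx).differentiableAt (hs.mem_nhds hx)).hasDerivAt
  rw [← hgh hx] at hfx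
  rw [(hfx.comp _ hh).deriv, Function.comp_apply, Pi.div_apply, hgh hx, div_eq_mul_inv]

theorem Set.LeftInvOn.differentiableOn_deriv_comp (hgh : LeftInvOn h g s)
    (hg : ContDiffOn ℝ 2 g s) (hs : IsOpen s) (hg' : ∀ x ∈ s, deriv g x ≠ 0)
    (hf : ContDiffOn ℝ 2 f s) : DifferentiableOn ℝ (deriv (f ∘ h)) (g '' s) := by
  have hderiv {u : ℝ → ℝ} (hu : ContDiffOn ℝ 2 u s) : DifferentiableOn ℝ (deriv u) s :=
    (hu.deriv_of_isOpen hs (m := 1) (by norm_num)).differentiableOn one_ne_zero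
  have hh : DifferentiableOn ℝ h (g '' s) := by
    rintro _ ⟨x, hx, rfl⟩
    exact (hgh.hasStrictDerivAt hg hs two_ne_zero hx (hg' x hx)).hasDerivAt.differentiableAt
      |>.differentiableWithinAt
  have hmaps : MapsTo h (g '' s) s := by
    rintro _ ⟨x, hx, rfl⟩
    rwa [hgh hx]
  refine DifferentiableOn.congr ?_ (hgh.deriv_comp hg hs two_ne_zero hg'
    (hf.differentiableOn two_ne_zero))
  exact ((hderiv hf).div (hderiv hg) hg').comp hh hmaps

end LeftInverse

theorem exists_sum_mul_deriv_eq_mul_deriv_of_sum_mul_deriv_deriv_comp_eq_zero {ι : Type*}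
    [Fintype ι] {F : ι → ℝ → ℝ} {g h : ℝ → ℝ} {s : Set ℝ} (c : ι → ℝ) (hs : IsOpen s)
    (hs' : IsPreconnected s) (hF : ∀ i, ContDiffOn ℝ 2 (F i) s) (hg : ContDiffOn ℝ 2 g s)
    (hg' : ∀ x ∈ s, deriv g x ≠ 0) (hgh : LeftInvOn h g s)
    (hzero : ∀ y ∈ g '' s, ∑ i, c i * deriv (deriv (F i ∘ h)) y = 0) :
    ∃ α, ∀ x ∈ s, ∑ i, c i * deriv (F i) x = α * deriv g x := by
  set φ : ℝ → ℝ := fun y => ∑ i, c i * deriv (F i ∘ h) y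
  have hJ : IsOpen (g '' s) := hg.isOpen_image hs two_ne_zero hg'
  have hdiff i := hgh.differentiableOn_deriv_comp hg hs hg' (hF i)
  have hφ : ∀ y ∈ g '' s, HasDerivAt φ 0 y := fun y hy => by
    rw [← hzero y hy]
    exact HasDerivAt.fun_sum fun i _ =>
      ((hdiff i y hy).differentiableAt (hJ.mem_nhds hy)).hasDerivAt.const_mul (c i)
  obtain ⟨α, hα⟩ := hJ.exists_is_const_of_deriv_eq_zero (hs'.image g hg.continuousOn)
    (fun y hy => (hφ y hy).differentiableAt.differentiableWithinAt)
    (fun y hy => (hφ y hy).deriv)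
  refine ⟨α, fun x hx => ?_⟩
  have hφx : φ (g x) = (∑ i, c i * deriv (F i) x) / deriv g x := by
    simp only [φ, Finset.sum_div, mul_div_assoc]
    refine Finset.sum_congr rfl fun i _ => ?_
    rw [hgh.deriv_comp hg hs two_ne_zero hg' ((hF i).differentiableOn two_ne_zero)
      (mem_image_of_mem g hx)]
    simp only [Function.comp_apply, Pi.div_apply, hgh hx]
  rw [← div_eq_iff (hg' x hx), ← hφx, hα _ (mem_image_of_mem g hx)]

theorem stmt_7_general (n : ℕ) (a b : ℝ) (hab : a < b) (U : Set ℝ)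
    (hIU : Set.Icc a b ⊆ U) (f : Fin (n + 1) → ℝ → ℝ)
    (hf : ∀ i, AnalyticOnNhd ℝ (f i) U)
    (hind : ∀ c : Fin (n + 1) → ℝ,
      (∀ x ∈ Set.Icc a b, ∑ i, c i * deriv (f i) x = 0) → c = 0)
    (hne : ∀ i, ∀ x ∈ Set.Icc a b, deriv (f i) x ≠ 0)
    (h : ℝ → ℝ) (hinv : ∀ x ∈ Set.Icc a b, h (f (Fin.last n) x) = x)
    (c : Fin n → ℝ)
    (hzero : ∀ y ∈ f (Fin.last n) '' Set.Icc a b,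
      ∑ i : Fin n, c i * deriv (deriv (f i.castSucc ∘ h)) y = 0) :
    c = 0 := by
  have hIoo : Ioo a b ⊆ Icc a b := Ioo_subset_Icc_self
  have hsmooth i : ContDiffOn ℝ 2 (f i) (Ioo a b) :=
    (hf i).contDiffOn_of_completeSpace.mono (hIoo.trans hIU)
  obtain ⟨α, hα⟩ := exists_sum_mul_deriv_eq_mul_deriv_of_sum_mul_deriv_deriv_comp_eq_zero c
    isOpen_Ioo isPreconnected_Ioo (fun i => hsmooth i.castSucc) (hsmooth (Fin.last n))
    (fun x hx => hne _ x (hIoo hx)) (fun x hx => hinv x (hIoo hx))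
    (fun y hy => hzero y (image_mono hIoo hy))
  have hvanish : EqOn (fun x => ∑ i, Fin.snoc (α := fun _ => ℝ) c (-α) i * deriv (f i) x) 0 (Icc a b) := by
    refine EqOn.of_subset_closure (fun x hx => ?_) ?_ continuousOn_const hIoo
      (closure_Ioo hab.ne).ge
    · simp [Fin.sum_univ_castSucc, hα x hx]
    · exact continuousOn_finsetSum _ fun i _ =>
        continuousOn_const.mul ((hf i).deriv.continuousOn.mono hIU)
  funext i
  simpa using congrFun (hind _ hvanish) i.castSucc

/-- If `f 0, ..., f n` are real analytic on an open set containing the compact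
interval `[a, b]`, with linearly independent and nonvanishing derivatives on
`[a, b]`, and `h` is the inverse of the last function `f (Fin.last n)` on
`[a, b]`, then the second derivatives `(f i ∘ h)''` for `i < n` are linearly
independent as functions on `f (Fin.last n) '' [a, b]`. -/
theorem stmt_7 (n : ℕ) (a b : ℝ) (hab : a < b) (U : Set ℝ) (hU : IsOpen U)
    (hIU : Set.Icc a b ⊆ U) (f : Fin (n + 1) → ℝ → ℝ)
    (hf : ∀ i, AnalyticOnNhd ℝ (f i) U)
    (hind : ∀ c : Fin (n + 1) → ℝ,
      (∀ x ∈ Set.Icc a b, ∑ i, c i * deriv (f i) x = 0) → c = 0)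
    (hne : ∀ i, ∀ x ∈ Set.Icc a b, deriv (f i) x ≠ 0)
    (h : ℝ → ℝ) (hinv : ∀ x ∈ Set.Icc a b, h (f (Fin.last n) x) = x)
    (c : Fin n → ℝ)
    (hzero : ∀ y ∈ f (Fin.last n) '' Set.Icc a b,
      ∑ i : Fin n, c i * deriv (deriv (f i.castSucc ∘ h)) y = 0) :
    c = 0 :=
  stmt_7_general n a b hab U hIU f hf hind hne h hinv c hzero
end

section
/- Let g_1, ..., g_n be linearly independent real analytic functions on a compact interval I (extending analytically to a neighborhood of I). Then there exists a natural number N, depending only on g_1, ..., g_n and I, such that every nontrivial real linear combination a_1 g_1 + ... + a_n g_n has at most N zeros in I. -/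
/-!
For `c` on the unit sphere and `x ∈ [a, b]`, some derivative of `∑ i, c i * g i` is nonzero
at `x`: otherwise the combination vanishes near `x`, hence on `[a, b]` by the identity theorem,
contradicting linear independence. If the `j`-th derivative is nonzero at `(c, x)`, it stays
nonzero for `(c', x')` nearby, and iterated Rolle bounds the number of zeros of
`∑ i, c' i * g i` near `x` by `j`. Compactness of `sphere × [a, b]` turns these local bounds
into a global one, and rescaling `c` does not change the zeros.
-/

open Set Filter Topology Metric

theorem Set.encard_le_coe_of_forall_finset_card_le {α : Type*} {s : Set α} {k : ℕ}
    (h : ∀ t : Finset α, ↑t ⊆ s → t.card ≤ k) : s.encard ≤ k := by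
  by_contra! hlt
  obtain ⟨t, hts, ht⟩ := exists_subset_encard_eq (Order.add_one_le_of_lt hlt)
  have htfin : t.Finite := finite_of_encard_eq_coe (k := k + 1) (by exact_mod_cast ht)
  have hcard := h htfin.toFinset (by simpa using hts)
  rw [htfin.encard_eq_coe_toFinset_card] at ht
  norm_cast at ht
  omega

/-- Only continuity is needed: `deriv f` is `0` wherever `f` is not differentiable. -/
theorem encard_zeros_le_encard_deriv_zeros_add_one {f : ℝ → ℝ} {s : Set ℝ}
    (hs : s.OrdConnected) (hf : ContinuousOn f s) :
    {x ∈ s | f x = 0}.encard ≤ {x ∈ s | deriv f x = 0}.encard + 1 := by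
  obtain hinf | hfin := {x ∈ s | deriv f x = 0}.infinite_or_finite
  · simp [hinf.encard_eq]
  rw [hfin.encard_eq_coe_toFinset_card]
  refine encard_le_coe_of_forall_finset_card_le fun S hS => ?_
  refine Finset.card_le_of_interleaved fun x hx y hy hxy _ => ?_
  obtain ⟨hxs, hfx⟩ := hS hx
  obtain ⟨hys, hfy⟩ := hS hy
  obtain ⟨z, hz, hz0⟩ :=
    exists_deriv_eq_zero hxy (hf.mono (hs.out hxs hys)) (hfx.trans hfy.symm)
  exact ⟨z, hfin.mem_toFinset.2 ⟨hs.out hxs hys (Ioo_subset_Icc_self hz), hz0⟩, hz⟩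

theorem encard_zeros_le_of_iteratedDeriv_ne_zero {f : ℝ → ℝ} {s : Set ℝ} (hs : s.OrdConnected)
    {m : ℕ} (hf : ∀ k < m, ContinuousOn (iteratedDeriv k f) s)
    (hm : ∀ x ∈ s, iteratedDeriv m f x ≠ 0) :
    {x ∈ s | f x = 0}.encard ≤ m := by
  induction m generalizing f with
  | zero => simpa [eq_empty_iff_forall_notMem] using hm
  | succ m ih =>
    have hderiv : {x ∈ s | deriv f x = 0}.encard ≤ m :=
      ih (fun k hk => by simpa [iteratedDeriv_succ'] using hf (k + 1) (by omega))
        (by simpa [iteratedDeriv_succ'] using hm)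
    calc {x ∈ s | f x = 0}.encard ≤ {x ∈ s | deriv f x = 0}.encard + 1 :=
          encard_zeros_le_encard_deriv_zeros_add_one hs (by simpa using hf 0 (by omega))
      _ ≤ (m + 1 : ℕ) := by push_cast; gcongr

theorem AnalyticOnNhd.eqOn_zero_of_preconnected_of_iteratedDeriv_eq_zero {𝕜 E : Type*}
    [NontriviallyNormedField 𝕜] [CharZero 𝕜] [NormedAddCommGroup E] [NormedSpace 𝕜 E]
    [CompleteSpace E] {f : 𝕜 → E} {s : Set 𝕜} {x : 𝕜} (hf : AnalyticOnNhd 𝕜 f s)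
    (hs : IsPreconnected s) (hx : x ∈ s) (h : ∀ j, iteratedDeriv j f x = 0) : EqOn f 0 s := by
  have htop : analyticOrderAt f x = ⊤ := ENat.eq_top_iff_forall_ge.2 fun k =>
    (natCast_le_analyticOrderAt_iff_iteratedDeriv_eq_zero (hf x hx)).2 fun i _ => h i
  exact hf.eqOn_zero_of_preconnected_of_eventuallyEq_zero hs hx (analyticOrderAt_eq_top.1 htop)

theorem IsCompact.exists_encard_fiber_le {X Y : Type*} [TopologicalSpace X] [TopologicalSpace Y]
    {K : Set (X × Y)} (hK : IsCompact K) {Z : X → Set Y}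
    (hloc : ∀ p ∈ K, ∃ m : ℕ, ∃ W ∈ 𝓝 p, ∀ c, {y ∈ Z c | (c, y) ∈ W}.encard ≤ m) :
    ∃ N : ℕ, ∀ c, {y ∈ Z c | (c, y) ∈ K}.encard ≤ N := by
  classical
  choose! m W hW hm using hloc
  obtain ⟨t, htK, hcover⟩ := hK.elim_nhds_subcover W hW
  refine ⟨∑ p ∈ t, m p, fun c => ?_⟩
  calc {y ∈ Z c | (c, y) ∈ K}.encard ≤ (⋃ p ∈ t, {y ∈ Z c | (c, y) ∈ W p}).encard :=
        encard_le_encard fun y ⟨hy, hyK⟩ => by simpa [hy] using hcover hyK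
    _ ≤ ∑ p ∈ t, {y ∈ Z c | (c, y) ∈ W p}.encard := t.set_encard_biUnion_le _
    _ ≤ ∑ p ∈ t, (m p : ℕ∞) := Finset.sum_le_sum fun p hp => hm p (htK p hp) c
    _ = (∑ p ∈ t, m p : ℕ) := by push_cast; rfl

section LinearCombination

variable {ι : Type*} [Fintype ι]

theorem iteratedDeriv_linearCombination {𝕜 : Type*} [NontriviallyNormedField 𝕜]
    {g : ι → 𝕜 → 𝕜} {j : ℕ} {x : 𝕜} (hg : ∀ i, ContDiffAt 𝕜 j (g i) x) (c : ι → 𝕜) :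
    iteratedDeriv j (fun y => ∑ i, c i * g i y) x = ∑ i, c i * iteratedDeriv j (g i) x := by
  rw [iteratedDeriv_fun_sum fun i _ => contDiffAt_const.mul (hg i)]
  exact Finset.sum_congr rfl fun i _ => iteratedDeriv_const_mul_field (c i) (g i)

variable {g : ι → ℝ → ℝ}

theorem exists_iteratedDeriv_linearCombination_ne_zero {s : Set ℝ} (hs : IsPreconnected s)
    (hg : ∀ i, AnalyticOnNhd ℝ (g i) s)
    (hind : ∀ c : ι → ℝ, (∀ x ∈ s, ∑ i, c i * g i x = 0) → c = 0) {c : ι → ℝ} (hc : c ≠ 0)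
    {x : ℝ} (hx : x ∈ s) : ∃ j, ∑ i, c i * iteratedDeriv j (g i) x ≠ 0 := by
  by_contra! h
  have hf : AnalyticOnNhd ℝ (fun y => ∑ i, c i * g i y) s :=
    Finset.univ.analyticOnNhd_fun_sum fun i _ => analyticOnNhd_const.mul (hg i)
  refine hc (hind c fun y hy => ?_)
  refine hf.eqOn_zero_of_preconnected_of_iteratedDeriv_eq_zero hs hx (fun j => ?_) hy
  rw [iteratedDeriv_linearCombination fun i => (hg i x hx).contDiffAt]
  exact h j

theorem exists_nhds_encard_zeros_linearCombination_le {c₀ : ι → ℝ} {x₀ : ℝ}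
    (hg : ∀ i, AnalyticAt ℝ (g i) x₀) {j : ℕ}
    (hj : ∑ i, c₀ i * iteratedDeriv j (g i) x₀ ≠ 0) :
    ∃ W ∈ 𝓝 (c₀, x₀), ∀ c, {x | ∑ i, c i * g i x = 0 ∧ (c, x) ∈ W}.encard ≤ j := by
  have hcont : ContinuousAt (fun q : (ι → ℝ) × ℝ => ∑ i, q.1 i * iteratedDeriv j (g i) q.2)
      (c₀, x₀) := by
    have hderiv : ∀ i, ContinuousAt (iteratedDeriv j (g i)) x₀ := fun i => by
      rw [iteratedDeriv_eq_iterate]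
      exact ((hg i).iterated_deriv j).continuousAt
    fun_prop
  have hev : ∀ᶠ q in 𝓝 (c₀, x₀), (∑ i, q.1 i * iteratedDeriv j (g i) q.2 ≠ 0) ∧
      ∀ i, AnalyticAt ℝ (g i) q.2 :=
    (hcont.eventually_ne hj).and ((continuous_snd.tendsto (c₀, x₀)).eventually
      (eventually_all.2 fun i => (hg i).eventually_analyticAt))
  obtain ⟨ε, hε, hball⟩ := eventually_nhds_iff_ball.1 hev
  refine ⟨ball c₀ ε ×ˢ ball x₀ ε, prod_mem_nhds (ball_mem_nhds _ hε) (ball_mem_nhds _ hε),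
    fun c => ?_⟩
  by_cases hc : c ∈ ball c₀ ε
  swap
  · simp [hc]
  have hcx : ∀ x ∈ ball x₀ ε, (c, x) ∈ ball (c₀, x₀) ε := fun x hx => by
    rw [← ball_prod_same]
    exact ⟨hc, hx⟩
  have hf : AnalyticOnNhd ℝ (fun y => ∑ i, c i * g i y) (ball x₀ ε) :=
    Finset.univ.analyticOnNhd_fun_sum fun i _ =>
      analyticOnNhd_const.mul fun x hx => (hball _ (hcx x hx)).2 i
  calc {x | ∑ i, c i * g i x = 0 ∧ (c, x) ∈ ball c₀ ε ×ˢ ball x₀ ε}.encard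
      ≤ {x ∈ ball x₀ ε | ∑ i, c i * g i x = 0}.encard :=
        encard_le_encard fun x ⟨h0, hx⟩ => ⟨hx.2, h0⟩
    _ ≤ j := by
      refine encard_zeros_le_of_iteratedDeriv_ne_zero (convex_ball x₀ ε).ordConnected
        (fun k _ => ?_) (fun x hx => ?_)
      · rw [iteratedDeriv_eq_iterate]
        exact (hf.iterated_deriv k).continuousOn
      · rw [iteratedDeriv_linearCombination fun i => ((hball _ (hcx x hx)).2 i).contDiffAt]
        exact (hball _ (hcx x hx)).1

end LinearCombination

theorem stmt_8_general (n : ℕ) (a b : ℝ) (U : Set ℝ)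
    (hIU : Set.Icc a b ⊆ U) (g : Fin n → ℝ → ℝ)
    (hg : ∀ i, AnalyticOnNhd ℝ (g i) U)
    (hind : ∀ c : Fin n → ℝ, (∀ x ∈ Set.Icc a b, ∑ i, c i * g i x = 0) → c = 0) :
    ∃ N : ℕ, ∀ c : Fin n → ℝ, c ≠ 0 →
      {x ∈ Set.Icc a b | ∑ i, c i * g i x = 0}.ncard ≤ N := by
  have hgI : ∀ i, AnalyticOnNhd ℝ (g i) (Icc a b) := fun i => (hg i).mono hIU
  obtain ⟨N, hN⟩ := ((isCompact_sphere (0 : Fin n → ℝ) 1).prod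
      (isCompact_Icc (a := a) (b := b))).exists_encard_fiber_le
    (Z := fun c => {x | ∑ i, c i * g i x = 0}) fun ⟨c, x⟩ ⟨hc, hx⟩ => by
      obtain ⟨j, hj⟩ := exists_iteratedDeriv_linearCombination_ne_zero isPreconnected_Icc hgI
        hind (ne_zero_of_mem_sphere one_ne_zero ⟨c, hc⟩) hx
      exact ⟨j, exists_nhds_encard_zeros_linearCombination_le (fun i => hgI i x hx) hj⟩
  refine ⟨N, fun c hc => ?_⟩
  have hzeros : {x ∈ Icc a b | ∑ i, c i * g i x = 0} =
      {x ∈ {x | ∑ i, (‖c‖⁻¹ • c) i * g i x = 0} |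
        (‖c‖⁻¹ • c, x) ∈ sphere 0 1 ×ˢ Icc a b} := by
    have hunit : ‖‖c‖⁻¹ • c‖ = 1 := norm_smul_inv_norm (𝕜 := ℝ) hc
    ext x
    simp [hunit, mul_assoc, ← Finset.mul_sum, hc, and_comm]
  rw [hzeros]
  exact_mod_cast (ncard_le_encard _).trans (hN _)

/-- Hurwitz-type corollary: for linearly independent real analytic functions
`g 0, ..., g (n-1)` on (a neighbourhood of) a compact interval `[a, b]`, there
is an `N` such that every nontrivial linear combination has at most `N` zeros
in `[a, b]`. -/
theorem stmt_8 (n : ℕ) (a b : ℝ) (hab : a < b) (U : Set ℝ) (hU : IsOpen U)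
    (hIU : Set.Icc a b ⊆ U) (g : Fin n → ℝ → ℝ)
    (hg : ∀ i, AnalyticOnNhd ℝ (g i) U)
    (hind : ∀ c : Fin n → ℝ, (∀ x ∈ Set.Icc a b, ∑ i, c i * g i x = 0) → c = 0) :
    ∃ N : ℕ, ∀ c : Fin n → ℝ, c ≠ 0 →
      {x ∈ Set.Icc a b | ∑ i, c i * g i x = 0}.ncard ≤ N :=
  stmt_8_general n a b U hIU g hg hind
end

section
/- Let f_1, ..., f_n be real analytic functions on a compact interval I such that f_1', ..., f_n' are linearly independent. Then there exists N = N(f_1,...,f_n, I) such that for every d with 0 < d < diam(I)/N, the discrete derivatives Δ_d f_1, ..., Δ_d f_n, where Δ_d f(x) = f(x+d) - f(x), are linearly independent as functions on I ∩ (I - d). -/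
open Filter Topology

/-- If `f 0, ..., f (n-1)` are real analytic on (a neighbourhood of) the compact
interval `[a, b]` with linearly independent derivatives, then there is an `N`
such that for every `0 < d < (b - a)/N` the discrete derivatives
`x ↦ f i (x + d) - f i x` are linearly independent as functions on
`[a, b] ∩ ([a, b] - d) = [a, b - d]`. -/
theorem stmt_9 (n : ℕ) (a b : ℝ) (hab : a < b) (U : Set ℝ) (hU : IsOpen U)
    (hIU : Set.Icc a b ⊆ U) (f : Fin n → ℝ → ℝ)
    (hf : ∀ i, AnalyticOnNhd ℝ (f i) U)
    (hind : ∀ c : Fin n → ℝ,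
      (∀ x ∈ Set.Icc a b, ∑ i, c i * deriv (f i) x = 0) → c = 0) :
    ∃ N : ℕ, 0 < N ∧ ∀ d : ℝ, 0 < d → d < (b - a) / N →
      ∀ c : Fin n → ℝ,
        (∀ x ∈ Set.Icc a (b - d), ∑ i, c i * (f i (x + d) - f i x) = 0) → c = 0 := by
  by_contra hcon
  push_neg at hcon
  choose d hd0 hdlt c hc hcne using fun k : ℕ => hcon (k + 1) (Nat.succ_pos k)
  set u : ℕ → (Fin n → ℝ) := fun k => ‖c k‖⁻¹ • c k with hu
  have hnorm : ∀ k, ‖u k‖ = 1 := fun k => by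
    rw [hu, norm_smul, norm_inv, norm_norm,
      inv_mul_cancel₀ (norm_ne_zero_iff.2 (hcne k))]
  have hueq : ∀ k, ∀ x ∈ Set.Icc a (b - d k),
      ∑ i, u k i * (f i (x + d k) - f i x) = 0 := by
    intro k x hx
    have h1 := hc k x hx
    simp only [hu, Pi.smul_apply, smul_eq_mul, mul_assoc, ← Finset.mul_sum, h1, mul_zero]
  have hd_lim : Tendsto d atTop (𝓝 0) := by
    have h1 : Tendsto (fun k : ℕ => (b - a) / ((k : ℝ) + 1)) atTop (𝓝 0) := by
      apply Tendsto.div_atTop tendsto_const_nhds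
      exact tendsto_atTop_add_const_right _ 1 tendsto_natCast_atTop_atTop
    have h2 : ∀ k : ℕ, d k ≤ (b - a) / ((k : ℝ) + 1) := by
      intro k
      have := (hdlt k).le
      push_cast at this
      exact this
    exact squeeze_zero (fun k => (hd0 k).le) h2 h1
  have hmem : ∀ k, u k ∈ Metric.sphere (0 : Fin n → ℝ) 1 := by
    intro k; simpa [mem_sphere_zero_iff_norm] using hnorm k
  obtain ⟨c₀, hc₀mem, φ, hφ, hconv⟩ :=
    (isCompact_sphere (0 : Fin n → ℝ) 1).tendsto_subseq hmem
  have hdφ : Tendsto (fun k => d (φ k)) atTop (𝓝 0) :=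
    hd_lim.comp hφ.tendsto_atTop
  -- the limit function vanishes on [a, b)
  have hIco : ∀ x ∈ Set.Ico a b, ∑ i, c₀ i * deriv (f i) x = 0 := by
    intro x hx
    have hxU : x ∈ U := hIU ⟨hx.1, hx.2.le⟩
    have hxd : Tendsto (fun k => x + d (φ k)) atTop (𝓝[≠] x) := by
      apply tendsto_nhdsWithin_of_tendsto_nhds_of_eventually_within
      · simpa using tendsto_const_nhds.add hdφ
      · filter_upwards with k
        have := hd0 (φ k)
        simp only [Set.mem_compl_iff, Set.mem_singleton_iff]
        intro h
        nlinarith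
    have hslope : ∀ i, Tendsto (fun k => (f i (x + d (φ k)) - f i x) / d (φ k))
        atTop (𝓝 (deriv (f i) x)) := by
      intro i
      have hda : HasDerivAt (f i) (deriv (f i) x) x :=
        ((hf i x hxU).differentiableAt).hasDerivAt
      have := (hasDerivAt_iff_tendsto_slope.1 hda).comp hxd
      simp only [Function.comp_def, slope_def_field, add_sub_cancel_left] at this
      exact this
    have hsum : Tendsto (fun k => ∑ i, u (φ k) i * ((f i (x + d (φ k)) - f i x) / d (φ k)))
        atTop (𝓝 (∑ i, c₀ i * deriv (f i) x)) := by
      apply tendsto_finset_sum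
      intro i _
      exact ((tendsto_pi_nhds.1 hconv) i).mul (hslope i)
    have hzero : ∀ᶠ k in atTop,
        (∑ i, u (φ k) i * ((f i (x + d (φ k)) - f i x) / d (φ k))) = 0 := by
      have hev : ∀ᶠ k in atTop, d (φ k) < b - x :=
        hdφ.eventually (eventually_lt_nhds (by linarith [hx.2] : (0:ℝ) < b - x))
      filter_upwards [hev] with k hk
      have hxmem : x ∈ Set.Icc a (b - d (φ k)) := ⟨hx.1, by linarith⟩
      have h1 := hueq (φ k) x hxmem
      rw [show (fun i => u (φ k) i * ((f i (x + d (φ k)) - f i x) / d (φ k)))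
          = fun i => (u (φ k) i * (f i (x + d (φ k)) - f i x)) / d (φ k) by
            funext i; ring]
      rw [← Finset.sum_div, h1, zero_div]
    exact tendsto_nhds_unique (hsum.congr' hzero) tendsto_const_nhds
  -- extend to x = b by continuity
  have hderiv_cont : Tendsto (fun x => ∑ i, c₀ i * deriv (f i) x) (𝓝 b)
      (𝓝 (∑ i, c₀ i * deriv (f i) b)) :=
    tendsto_finset_sum _ fun i _ =>
      tendsto_const_nhds.mul (((hf i).deriv) b (hIU ⟨hab.le, le_refl b⟩)).continuousAt
  have hb0 : ∑ i, c₀ i * deriv (f i) b = 0 := by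
    have hne : (𝓝[Set.Ico a b] b).NeBot := by
      rw [← mem_closure_iff_nhdsWithin_neBot, closure_Ico hab.ne]
      exact ⟨hab.le, le_refl b⟩
    have h1 : Tendsto (fun x => ∑ i, c₀ i * deriv (f i) x) (𝓝[Set.Ico a b] b)
        (𝓝 (∑ i, c₀ i * deriv (f i) b)) := hderiv_cont.mono_left nhdsWithin_le_nhds
    have h2 : Tendsto (fun x => ∑ i, c₀ i * deriv (f i) x) (𝓝[Set.Ico a b] b) (𝓝 0) := by
      apply Tendsto.congr' _ tendsto_const_nhds
      filter_upwards [eventually_mem_nhdsWithin] with y hy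
      exact (hIco y hy).symm
    exact tendsto_nhds_unique h1 h2
  have hall : ∀ x ∈ Set.Icc a b, ∑ i, c₀ i * deriv (f i) x = 0 := by
    intro x hx
    rcases lt_or_eq_of_le hx.2 with h | h
    · exact hIco x ⟨hx.1, h⟩
    · rw [h]; exact hb0
  have := hind c₀ hall
  rw [mem_sphere_zero_iff_norm] at hc₀mem
  rw [this] at hc₀mem
  simp at hc₀mem
end

section
/- Let f(x) = Σ_{j=0}^{m} c_j x^j be a real polynomial of degree m ≥ n+1 (so c_m ≠ 0), and let δ_1, ..., δ_n be distinct positive real numbers. Then the polynomials Δ_{δ_i} f'(x) := f'(x + δ_i) - f'(x), for 1 ≤ i ≤ n, are linearly independent over ℝ. -/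
open Polynomial Finset


/-- For a real polynomial `f` of degree `m ≥ n + 1` and distinct positive reals
`δ 1, ..., δ n`, the functions `x ↦ f'(x + δ i) - f'(x)` are linearly
independent over `ℝ`. -/
theorem stmt_14 (n : ℕ) (f : Polynomial ℝ) (hdeg : n + 1 ≤ f.natDegree)
    (δ : Fin n → ℝ) (hpos : ∀ i, 0 < δ i) (hinj : Function.Injective δ) :
    LinearIndependent ℝ (fun i : Fin n => fun x : ℝ =>
      f.derivative.eval (x + δ i) - f.derivative.eval x) := by
  rw [Fintype.linearIndependent_iff]
  intro g hg
  set f' := f.derivative with hf'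
  set m' := f.natDegree - 1 with hm'
  have hm : m' + 1 = f.natDegree := by omega
  have hnm : n ≤ m' := by omega
  have hlead : f'.coeff m' ≠ 0 := by
    rw [hf', Polynomial.coeff_derivative]
    have hf0 : f ≠ 0 := fun h => by rw [h, Polynomial.natDegree_zero] at hdeg; omega
    have h1 : f.coeff (m' + 1) ≠ 0 := by
      rw [hm]
      exact Polynomial.leadingCoeff_ne_zero.mpr hf0
    exact mul_ne_zero h1 (by positivity)
  have hdeg' : f'.natDegree ≤ m' := Polynomial.natDegree_derivative_le f
  -- the polynomial identity
  have hP : (∑ i, Polynomial.C (g i) * (Polynomial.taylor (δ i) f' - f')) = 0 := by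
    apply Polynomial.funext
    intro x
    have h := congrFun hg x
    simp only [Finset.sum_apply, Pi.smul_apply, smul_eq_mul, Pi.zero_apply] at h
    rw [Polynomial.eval_finset_sum, Polynomial.eval_zero]
    simp only [Polynomial.eval_mul, Polynomial.eval_C, Polynomial.eval_sub,
      Polynomial.taylor_eval]
    exact h
  -- key coefficient computation
  have key : ∀ k, 1 ≤ k → k ≤ n → ∑ i, g i * δ i ^ k = 0 := by
    intro k
    induction k using Nat.strong_induction_on with
    | _ k ih =>
    intro hk1 hkn
    have hkm : k ≤ m' := le_trans hkn hnm
    set d := m' - k with hd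
    have hdk : d + k = m' := by omega
    have h0 : (∑ i, Polynomial.C (g i) * (Polynomial.taylor (δ i) f' - f')).coeff d = 0 := by
      rw [hP]; simp
    rw [Polynomial.finset_sum_coeff] at h0
    have heval : ∀ i, (Polynomial.taylor (δ i) f').coeff d
        = ∑ j ∈ range (k + 1), ((j + d).choose d * f'.coeff (j + d)) * δ i ^ j := by
      intro i
      rw [Polynomial.taylor_coeff]
      rw [Polynomial.eval_eq_sum_range' (n := k + 1)
        (lt_of_le_of_lt ((Polynomial.natDegree_hasseDeriv_le f' d).trans (by omega))
          (Nat.lt_succ_self k))]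
      refine Finset.sum_congr rfl fun j _ => ?_
      rw [Polynomial.hasseDeriv_coeff]
    simp only [Polynomial.coeff_C_mul, Polynomial.coeff_sub, heval] at h0
    -- pull out the j = 0 term
    have hsplit : ∀ i, (∑ j ∈ range (k + 1), ((j + d).choose d * f'.coeff (j + d)) * δ i ^ j)
        - f'.coeff d = ∑ j ∈ range k, (((j+1) + d).choose d * f'.coeff ((j+1) + d)) * δ i ^ (j+1) := by
      intro i
      rw [Finset.sum_range_succ']
      simp
    simp only [hsplit, Finset.mul_sum] at h0
    rw [Finset.sum_comm] at h0
    have hlast : ∀ j ∈ range (k-1), (∑ i, g i * ((((j+1) + d).choose d * f'.coeff ((j+1) + d)) * δ i ^ (j+1))) = 0 := by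
      intro j hj
      rw [Finset.mem_range] at hj
      have := ih (j+1) (by omega) (by omega) (by omega)
      calc (∑ i, g i * ((((j+1) + d).choose d * f'.coeff ((j+1) + d)) * δ i ^ (j+1)))
          = (((j+1) + d).choose d * f'.coeff ((j+1) + d)) * ∑ i, g i * δ i ^ (j+1) := by
            rw [Finset.mul_sum]; exact Finset.sum_congr rfl fun i _ => by ring
        _ = 0 := by rw [this, mul_zero]
    have hkk : k = (k - 1) + 1 := by omega
    rw [hkk, Finset.sum_range_succ, Finset.sum_eq_zero hlast, zero_add, ← hkk] at h0
    have hck : (((k + d).choose d : ℝ) * f'.coeff (k + d)) ≠ 0 := by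
      rw [add_comm k d, hdk]
      refine mul_ne_zero ?_ hlead
      exact Nat.cast_ne_zero.mpr (Nat.choose_pos (by omega)).ne'
    have : ((k + d).choose d : ℝ) * f'.coeff (k + d) * ∑ i, g i * δ i ^ k = 0 := by
      rw [Finset.mul_sum, ← h0]
      exact Finset.sum_congr rfl fun i _ => by ring
    exact (mul_eq_zero.mp this).resolve_left hck
  -- Vandermonde step
  set M : Matrix (Fin n) (Fin n) ℝ := Matrix.of fun k i => δ i ^ ((k : ℕ) + 1) with hM
  have hmv : M.mulVec g = 0 := by
    funext k
    simp only [Matrix.mulVec, dotProduct, hM, Matrix.of_apply, Pi.zero_apply]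
    rw [← key ((k : ℕ) + 1) (by omega) (by omega)]
    exact Finset.sum_congr rfl fun i _ => by ring
  have hMeq : M = (Matrix.vandermonde δ).transpose * Matrix.diagonal δ := by
    ext k i
    rw [Matrix.mul_diagonal, Matrix.transpose_apply, Matrix.vandermonde_apply]
    rw [hM, Matrix.of_apply, pow_succ]
  have hdet : M.det ≠ 0 := by
    rw [hMeq, Matrix.det_mul, Matrix.det_transpose, Matrix.det_vandermonde,
      Matrix.det_diagonal]
    refine mul_ne_zero (Finset.prod_ne_zero_iff.mpr fun i _ =>
      Finset.prod_ne_zero_iff.mpr fun j hj => ?_)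
      (Finset.prod_ne_zero_iff.mpr fun i _ => (hpos i).ne')
    rw [Finset.mem_Ioi] at hj
    exact sub_ne_zero_of_ne fun h => hj.ne' (hinj h)
  have := Matrix.eq_zero_of_mulVec_eq_zero hdet hmv
  exact fun i => congrFun this i
end

section
/- Let f(x) = arctan(eˣ). Then for all real x, f'(x) = eˣ/(1 + e^{2x}), and f' is positive everywhere; moreover for distinct positive reals δ_1, δ_2, δ_3, setting σ_i = e^{δ_i}, the Wronskian W(Δ_{δ_1}f', Δ_{δ_2}f', Δ_{δ_3}f') does not vanish identically, so the functions Δ_{δ_1}f', Δ_{δ_2}f', Δ_{δ_3}f' are linearly independent. -/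
/-- `f(x) = arctan (eˣ)`. -/
noncomputable def fArctanExp : ℝ → ℝ := fun x => Real.arctan (Real.exp x)

/-- The discrete derivative `Δ_δ f'` of `f' = (arctan ∘ exp)'`. -/
noncomputable def gD (δ : ℝ) : ℝ → ℝ := fun x =>
  deriv fArctanExp (x + δ) - deriv fArctanExp x

/-!
As `x → ∞`, `f'(x) = e⁻ˣ - e⁻³ˣ + e⁻⁵ˣ - ⋯`, so with `t = e^{-δ}` we get
`Δ_δ f'(x) = (t - 1) e⁻ˣ - (t³ - 1) e⁻³ˣ + (t⁵ - 1) e⁻⁵ˣ - ⋯`. The row operations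
`R₂ + R₁` and `R₃ + 4 R₂ + 3 R₁` on the Wronskian annihilate the terms `e⁻ˣ`, resp. `e⁻ˣ, e⁻³ˣ`,
so `e⁹ˣ W(x)` tends to the determinant with columns `(tᵢ - 1, 2 (tᵢ³ - 1), 8 (tᵢ⁵ - 1))`.
That determinant is `16 ∏ (tᵢ - 1) ∏_{i<j} (tⱼ - tᵢ)` times a polynomial with positive
coefficients, hence nonzero. So `W(x₀) ≠ 0` for some `x₀`, and a vanishing linear combination,
differentiated twice, gives a kernel vector of the Wronskian matrix at `x₀`.
-/

open Filter Topology Real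

noncomputable def fArctanExp₁ (x : ℝ) : ℝ := exp x / (1 + exp x ^ 2)

noncomputable def fArctanExp₂ (x : ℝ) : ℝ :=
  exp x * (1 - exp x ^ 2) / (1 + exp x ^ 2) ^ 2

noncomputable def fArctanExp₃ (x : ℝ) : ℝ :=
  exp x * (1 - 6 * exp x ^ 2 + exp x ^ 4) / (1 + exp x ^ 2) ^ 3

lemma hasDerivAt_fArctanExp (x : ℝ) : HasDerivAt fArctanExp (fArctanExp₁ x) x := by
  refine ((hasDerivAt_arctan _).comp x (hasDerivAt_exp x)).congr_deriv ?_
  simp only [fArctanExp₁]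
  field_simp

lemma hasDerivAt_fArctanExp₁ (x : ℝ) : HasDerivAt fArctanExp₁ (fArctanExp₂ x) x := by
  have hden := ((hasDerivAt_exp x).fun_pow 2).const_add 1
  refine ((hasDerivAt_exp x).fun_div hden (by positivity)).congr_deriv ?_
  simp only [fArctanExp₂]
  field_simp
  ring

lemma hasDerivAt_fArctanExp₂ (x : ℝ) : HasDerivAt fArctanExp₂ (fArctanExp₃ x) x := by
  have hsq := (hasDerivAt_exp x).fun_pow 2
  have hnum := (hasDerivAt_exp x).fun_mul (hsq.const_sub 1)
  have hden := (hsq.const_add 1).fun_pow 2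
  refine (hnum.fun_div hden (by positivity)).congr_deriv ?_
  simp only [fArctanExp₃]
  field_simp
  ring

lemma deriv_fArctanExp : deriv fArctanExp = fArctanExp₁ :=
  funext fun x => (hasDerivAt_fArctanExp x).deriv

lemma hasDerivAt_sub_comp_add_const {F F' : ℝ → ℝ} (hF : ∀ x, HasDerivAt F (F' x) x)
    (δ x : ℝ) : HasDerivAt (fun x => F (x + δ) - F x) (F' (x + δ) - F' x) x :=
  ((hF (x + δ)).comp_add_const x δ).sub (hF x)

lemma gD_eq (δ : ℝ) : gD δ = fun x => fArctanExp₁ (x + δ) - fArctanExp₁ x := by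
  funext x
  simp only [gD, deriv_fArctanExp]

lemma hasDerivAt_gD (δ x : ℝ) :
    HasDerivAt (gD δ) (fArctanExp₂ (x + δ) - fArctanExp₂ x) x := by
  rw [gD_eq]
  exact hasDerivAt_sub_comp_add_const hasDerivAt_fArctanExp₁ δ x

lemma deriv_gD (δ : ℝ) : deriv (gD δ) = fun x => fArctanExp₂ (x + δ) - fArctanExp₂ x :=
  funext fun x => (hasDerivAt_gD δ x).deriv

lemma hasDerivAt_deriv_gD (δ x : ℝ) :
    HasDerivAt (deriv (gD δ)) (fArctanExp₃ (x + δ) - fArctanExp₃ x) x := by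
  rw [deriv_gD]
  exact hasDerivAt_sub_comp_add_const hasDerivAt_fArctanExp₂ δ x

lemma deriv_deriv_gD (δ : ℝ) :
    deriv (deriv (gD δ)) = fun x => fArctanExp₃ (x + δ) - fArctanExp₃ x :=
  funext fun x => (hasDerivAt_deriv_gD δ x).deriv

noncomputable def expSqRatio (x : ℝ) : ℝ := exp x ^ 2 / (1 + exp x ^ 2)

lemma tendsto_expSqRatio : Tendsto expSqRatio atTop (𝓝 1) := by
  have h : Tendsto (fun x => 1 + exp x ^ 2) atTop atTop :=
    tendsto_atTop_add_const_left _ 1 ((tendsto_pow_atTop two_ne_zero).comp tendsto_exp_atTop)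
  have hr : expSqRatio = fun x => 1 - (1 + exp x ^ 2)⁻¹ := by
    funext x
    simp only [expSqRatio]
    field_simp
    ring
  rw [hr]
  simpa using tendsto_const_nhds.sub h.inv_tendsto_atTop

lemma exp_mul_fArctanExp₁ (x : ℝ) : exp x * fArctanExp₁ x = expSqRatio x := by
  simp only [fArctanExp₁, expSqRatio]
  field_simp

lemma exp_pow_three_mul_fArctanExp_combination (x : ℝ) :
    exp x ^ 3 * (fArctanExp₁ x + fArctanExp₂ x) = 2 * expSqRatio x ^ 2 := by
  simp only [fArctanExp₁, fArctanExp₂, expSqRatio]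
  field_simp
  ring

lemma exp_pow_five_mul_fArctanExp_combination (x : ℝ) :
    exp x ^ 5 * (fArctanExp₃ x + 4 * fArctanExp₂ x + 3 * fArctanExp₁ x) =
      8 * expSqRatio x ^ 3 := by
  simp only [fArctanExp₁, fArctanExp₂, fArctanExp₃, expSqRatio]
  field_simp
  ring

lemma tendsto_exp_pow_mul_sub_comp_add_const {G : ℝ → ℝ} {L : ℝ} (k : ℕ) (δ : ℝ)
    (hG : Tendsto (fun x => exp x ^ k * G x) atTop (𝓝 L)) :
    Tendsto (fun x => exp x ^ k * (G (x + δ) - G x)) atTop (𝓝 ((exp (-δ) ^ k - 1) * L)) := by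
  have hshift := (hG.comp (tendsto_atTop_add_const_right atTop δ tendsto_id)).const_mul
    (exp (-δ) ^ k)
  rw [show (exp (-δ) ^ k - 1) * L = exp (-δ) ^ k * L - L by ring]
  refine (hshift.sub hG).congr fun x => ?_
  have : exp x = exp (-δ) * exp (x + δ) := by rw [← exp_add]; ring_nf
  simp only [Function.comp_apply, id]
  rw [this]
  ring

lemma tendsto_exp_mul_gD (δ : ℝ) :
    Tendsto (fun x => exp x * gD δ x) atTop (𝓝 (exp (-δ) - 1)) := by
  have hG : Tendsto (fun x => exp x ^ 1 * fArctanExp₁ x) atTop (𝓝 1) := by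
    simpa only [pow_one, exp_mul_fArctanExp₁] using tendsto_expSqRatio
  simpa [gD_eq] using tendsto_exp_pow_mul_sub_comp_add_const 1 δ hG

lemma tendsto_exp_pow_three_mul_gD_combination (δ : ℝ) :
    Tendsto (fun x => exp x ^ 3 * (gD δ x + deriv (gD δ) x)) atTop
      (𝓝 (2 * (exp (-δ) ^ 3 - 1))) := by
  have hG : Tendsto (fun x => exp x ^ 3 * (fArctanExp₁ x + fArctanExp₂ x)) atTop (𝓝 2) := by
    simpa only [exp_pow_three_mul_fArctanExp_combination, one_pow, mul_one] using
      (tendsto_expSqRatio.pow 2).const_mul 2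
  rw [mul_comm]
  refine (tendsto_exp_pow_mul_sub_comp_add_const 3 δ hG).congr fun x => ?_
  rw [deriv_gD, gD_eq]
  ring

lemma tendsto_exp_pow_five_mul_gD_combination (δ : ℝ) :
    Tendsto (fun x => exp x ^ 5 * (deriv (deriv (gD δ)) x + 4 * deriv (gD δ) x + 3 * gD δ x))
      atTop (𝓝 (8 * (exp (-δ) ^ 5 - 1))) := by
  have hG : Tendsto (fun x => exp x ^ 5 *
      (fArctanExp₃ x + 4 * fArctanExp₂ x + 3 * fArctanExp₁ x)) atTop (𝓝 8) := by
    simpa only [exp_pow_five_mul_fArctanExp_combination, one_pow, mul_one] using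
      (tendsto_expSqRatio.pow 3).const_mul 8
  rw [mul_comm]
  refine (tendsto_exp_pow_mul_sub_comp_add_const 5 δ hG).congr fun x => ?_
  rw [deriv_deriv_gD, deriv_gD, gD_eq]
  ring

def powSubOneMatrix (t₁ t₂ t₃ : ℝ) : Matrix (Fin 3) (Fin 3) ℝ :=
  !![t₁ - 1, t₂ - 1, t₃ - 1;
    2 * (t₁ ^ 3 - 1), 2 * (t₂ ^ 3 - 1), 2 * (t₃ ^ 3 - 1);
    8 * (t₁ ^ 5 - 1), 8 * (t₂ ^ 5 - 1), 8 * (t₃ ^ 5 - 1)]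

lemma det_powSubOneMatrix_ne_zero {t₁ t₂ t₃ : ℝ} (h₁ : 0 < t₁) (h₂ : 0 < t₂) (h₃ : 0 < t₃)
    (h₁' : t₁ ≠ 1) (h₂' : t₂ ≠ 1) (h₃' : t₃ ≠ 1)
    (h₁₂ : t₁ ≠ t₂) (h₁₃ : t₁ ≠ t₃) (h₂₃ : t₂ ≠ t₃) :
    (powSubOneMatrix t₁ t₂ t₃).det ≠ 0 := by
  set S := t₃ + t₃ ^ 2 + t₂ + 2 * t₂ * t₃ + t₂ * t₃ ^ 2 + t₂ ^ 2 + t₂ ^ 2 * t₃ + t₁ +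
    2 * t₁ * t₃ + t₁ * t₃ ^ 2 + 2 * t₁ * t₂ + 2 * t₁ * t₂ * t₃ + t₁ * t₂ ^ 2 +
    t₁ ^ 2 + t₁ ^ 2 * t₃ + t₁ ^ 2 * t₂ with hS
  have hfactor : (powSubOneMatrix t₁ t₂ t₃).det =
      16 * (t₁ - 1) * (t₂ - 1) * (t₃ - 1) * (t₂ - t₁) * (t₃ - t₁) * (t₃ - t₂) * S := by
    simp only [powSubOneMatrix, Matrix.det_fin_three, Fin.isValue, Matrix.of_apply,
      Matrix.cons_val', Matrix.cons_val_zero, Matrix.cons_val_fin_one, Matrix.cons_val_one,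
      Matrix.cons_val, hS]
    ring
  have hSpos : 0 < S := by positivity
  rw [hfactor]
  have := sub_ne_zero.2 h₁'
  have := sub_ne_zero.2 h₂'
  have := sub_ne_zero.2 h₃'
  have := sub_ne_zero.2 h₁₂.symm
  have := sub_ne_zero.2 h₁₃.symm
  have := sub_ne_zero.2 h₂₃.symm
  positivity

noncomputable def wronskianMatrix (g₁ g₂ g₃ : ℝ → ℝ) (x : ℝ) : Matrix (Fin 3) (Fin 3) ℝ :=
  !![g₁ x, g₂ x, g₃ x;
    deriv g₁ x, deriv g₂ x, deriv g₃ x;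
    deriv (deriv g₁) x, deriv (deriv g₂) x, deriv (deriv g₃) x]

lemma lincomb_deriv_eq_zero {g₁ g₂ g₃ : ℝ → ℝ} (h₁ : Differentiable ℝ g₁)
    (h₂ : Differentiable ℝ g₂) (h₃ : Differentiable ℝ g₃) {a b c : ℝ}
    (h : ∀ x, a * g₁ x + b * g₂ x + c * g₃ x = 0) (x : ℝ) :
    a * deriv g₁ x + b * deriv g₂ x + c * deriv g₃ x = 0 := by
  have hderiv := (((h₁ x).hasDerivAt.const_mul a).fun_add
    ((h₂ x).hasDerivAt.const_mul b)).fun_add ((h₃ x).hasDerivAt.const_mul c)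
  rw [show (fun x => a * g₁ x + b * g₂ x + c * g₃ x) = fun _ => 0 from funext h] at hderiv
  exact hderiv.unique (hasDerivAt_const x 0)

lemma eq_zero_of_det_wronskianMatrix_ne_zero {g₁ g₂ g₃ : ℝ → ℝ}
    (h₁ : Differentiable ℝ g₁) (h₂ : Differentiable ℝ g₂) (h₃ : Differentiable ℝ g₃)
    (h₁' : Differentiable ℝ (deriv g₁)) (h₂' : Differentiable ℝ (deriv g₂))
    (h₃' : Differentiable ℝ (deriv g₃)) {x₀ : ℝ} (hW : (wronskianMatrix g₁ g₂ g₃ x₀).det ≠ 0)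
    {a b c : ℝ} (h : ∀ x, a * g₁ x + b * g₂ x + c * g₃ x = 0) :
    a = 0 ∧ b = 0 ∧ c = 0 := by
  have hd := lincomb_deriv_eq_zero h₁ h₂ h₃ h
  have hdd := lincomb_deriv_eq_zero h₁' h₂' h₃' hd
  have hker : (wronskianMatrix g₁ g₂ g₃ x₀).mulVec ![a, b, c] = 0 := by
    ext i
    fin_cases i
    · simpa [wronskianMatrix, Matrix.mulVec, dotProduct, Fin.sum_univ_three, mul_comm]
        using h x₀
    · simpa [wronskianMatrix, Matrix.mulVec, dotProduct, Fin.sum_univ_three, mul_comm]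
        using hd x₀
    · simpa [wronskianMatrix, Matrix.mulVec, dotProduct, Fin.sum_univ_three, mul_comm]
        using hdd x₀
  have hv := Matrix.eq_zero_of_mulVec_eq_zero hW hker
  exact ⟨by simpa using congr_fun hv 0, by simpa using congr_fun hv 1,
    by simpa using congr_fun hv 2⟩

lemma tendsto_exp_pow_nine_mul_det_wronskianMatrix (δ₁ δ₂ δ₃ : ℝ) :
    Tendsto (fun x => exp x ^ 9 * (wronskianMatrix (gD δ₁) (gD δ₂) (gD δ₃) x).det) atTop
      (𝓝 (powSubOneMatrix (exp (-δ₁)) (exp (-δ₂)) (exp (-δ₃))).det) := by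
  have hscaled : Tendsto (fun x => !![
      exp x * gD δ₁ x, exp x * gD δ₂ x, exp x * gD δ₃ x;
      exp x ^ 3 * (gD δ₁ x + deriv (gD δ₁) x), exp x ^ 3 * (gD δ₂ x + deriv (gD δ₂) x),
        exp x ^ 3 * (gD δ₃ x + deriv (gD δ₃) x);
      exp x ^ 5 * (deriv (deriv (gD δ₁)) x + 4 * deriv (gD δ₁) x + 3 * gD δ₁ x),
        exp x ^ 5 * (deriv (deriv (gD δ₂)) x + 4 * deriv (gD δ₂) x + 3 * gD δ₂ x),
        exp x ^ 5 * (deriv (deriv (gD δ₃)) x + 4 * deriv (gD δ₃) x + 3 * gD δ₃ x)])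
      atTop (𝓝 (powSubOneMatrix (exp (-δ₁)) (exp (-δ₂)) (exp (-δ₃)))) := by
    refine tendsto_pi_nhds.2 fun i => tendsto_pi_nhds.2 fun j => ?_
    fin_cases i <;> fin_cases j
    exacts [tendsto_exp_mul_gD δ₁, tendsto_exp_mul_gD δ₂, tendsto_exp_mul_gD δ₃,
      tendsto_exp_pow_three_mul_gD_combination δ₁, tendsto_exp_pow_three_mul_gD_combination δ₂,
      tendsto_exp_pow_three_mul_gD_combination δ₃, tendsto_exp_pow_five_mul_gD_combination δ₁,
      tendsto_exp_pow_five_mul_gD_combination δ₂, tendsto_exp_pow_five_mul_gD_combination δ₃]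
  refine ((continuous_id.matrix_det.tendsto _).comp hscaled).congr fun x => ?_
  simp only [Function.comp_apply, id, wronskianMatrix, Matrix.det_fin_three, Fin.isValue,
    Matrix.of_apply, Matrix.cons_val', Matrix.cons_val_zero, Matrix.cons_val_fin_one,
    Matrix.cons_val_one, Matrix.cons_val]
  ring

lemma exists_det_wronskianMatrix_gD_ne_zero {δ₁ δ₂ δ₃ : ℝ} (h₁ : δ₁ ≠ 0) (h₂ : δ₂ ≠ 0)
    (h₃ : δ₃ ≠ 0) (h₁₂ : δ₁ ≠ δ₂) (h₁₃ : δ₁ ≠ δ₃) (h₂₃ : δ₂ ≠ δ₃) :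
    ∃ x, (wronskianMatrix (gD δ₁) (gD δ₂) (gD δ₃) x).det ≠ 0 := by
  have hne_one {δ : ℝ} (h : δ ≠ 0) : exp (-δ) ≠ 1 := by simpa using h
  have hlim := det_powSubOneMatrix_ne_zero (exp_pos (-δ₁)) (exp_pos (-δ₂)) (exp_pos (-δ₃))
    (hne_one h₁) (hne_one h₂) (hne_one h₃) (by simpa using h₁₂) (by simpa using h₁₃)
    (by simpa using h₂₃)
  obtain ⟨x, hx⟩ :=
    ((tendsto_exp_pow_nine_mul_det_wronskianMatrix δ₁ δ₂ δ₃).eventually_ne hlim).exists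
  exact ⟨x, right_ne_zero_of_mul hx⟩

lemma differentiable_gD (δ : ℝ) : Differentiable ℝ (gD δ) :=
  fun x => (hasDerivAt_gD δ x).differentiableAt

lemma differentiable_deriv_gD (δ : ℝ) : Differentiable ℝ (deriv (gD δ)) :=
  fun x => (hasDerivAt_deriv_gD δ x).differentiableAt

/-- For `f(x) = arctan(eˣ)`: `f'(x) = eˣ/(1 + e^{2x}) > 0`, and for distinct
positive `δ₁, δ₂, δ₃` the Wronskian of `Δ_{δ₁} f', Δ_{δ₂} f', Δ_{δ₃} f'` does
not vanish identically, so these three functions are linearly independent. -/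
theorem stmt_17 :
    (∀ x : ℝ, deriv fArctanExp x = Real.exp x / (1 + Real.exp (2 * x)) ∧
      0 < deriv fArctanExp x) ∧
    ∀ δ₁ δ₂ δ₃ : ℝ, 0 < δ₁ → 0 < δ₂ → 0 < δ₃ →
      δ₁ ≠ δ₂ → δ₁ ≠ δ₃ → δ₂ ≠ δ₃ →
      (∃ x : ℝ,
        (Matrix.det !![gD δ₁ x, gD δ₂ x, gD δ₃ x;
          deriv (gD δ₁) x, deriv (gD δ₂) x, deriv (gD δ₃) x;
          deriv (deriv (gD δ₁)) x, deriv (deriv (gD δ₂)) x,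
            deriv (deriv (gD δ₃)) x]) ≠ 0) ∧
      ∀ a b c : ℝ, (∀ x : ℝ, a * gD δ₁ x + b * gD δ₂ x + c * gD δ₃ x = 0) →
        a = 0 ∧ b = 0 ∧ c = 0 := by
  refine ⟨fun x => ?_, fun δ₁ δ₂ δ₃ h₁ h₂ h₃ h₁₂ h₁₃ h₂₃ => ?_⟩
  · have hf' : deriv fArctanExp x = exp x / (1 + exp (2 * x)) := by
      rw [deriv_fArctanExp, fArctanExp₁, ← exp_nat_mul, Nat.cast_ofNat]
    exact ⟨hf', hf' ▸ by positivity⟩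
  · obtain ⟨x₀, hx₀⟩ := exists_det_wronskianMatrix_gD_ne_zero h₁.ne' h₂.ne' h₃.ne' h₁₂ h₁₃ h₂₃
    exact ⟨⟨x₀, hx₀⟩, fun a b c => eq_zero_of_det_wronskianMatrix_ne_zero (differentiable_gD δ₁)
      (differentiable_gD δ₂) (differentiable_gD δ₃) (differentiable_deriv_gD δ₁)
      (differentiable_deriv_gD δ₂) (differentiable_deriv_gD δ₃) hx₀⟩
end
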